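/- Let A, B, C be finite relational structures over a common signature. If S^{AB} ⊆ Hom_k(A,B) and S^{BC} ⊆ Hom_k(B,C) are both nonempty, downward-closed, and satisfy the forth property, then the set S^{AC} = { s ∘ t : t ∈ S^{AB}, s ∈ S^{BC}, im(t) ⊆ dom(s) } is nonempty, downward-closed, and satisfies the forth property. In particular the relation →_k (k-consistency) is transitive. -/
import Mathlib


open scoped Classical

/-- A (relational) signature: a type of relation symbols with arities. -/
structure Sig where
  symb : Type
  ar : symb → ℕ

/-- A relational structure over a signature `σ`. -/
structure Str (σ : Sig) where
  carrier : Type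
  rel : ∀ r : σ.symb, (Fin (σ.ar r) → carrier) → Prop

/-- A (total) homomorphism of relational structures. -/
def IsHom {σ : Sig} (A B : Str σ) (h : A.carrier → B.carrier) : Prop :=
  ∀ r t, A.rel r t → B.rel r (fun i => h (t i))

/-- An isomorphism of relational structures: a bijection preserving and reflecting relations. -/
def IsIso {σ : Sig} (A B : Str σ) (h : A.carrier → B.carrier) : Prop :=
  Function.Bijective h ∧ ∀ r t, A.rel r t ↔ B.rel r (fun i => h (t i))

/-- Domain of a partial function (coded as an `Option`-valued function). -/
def pdom {α β : Type*} (s : α → Option β) : Set α := {a | s a ≠ none}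

/-- Image of a partial function. -/
def pim {α β : Type*} (s : α → Option β) : Set β := {b | ∃ a, s a = some b}

/-- Restriction of a partial function to a set. -/
noncomputable def restrictP {α β : Type*} (s : α → Option β) (U : Set α) : α → Option β :=
  fun a => if a ∈ U then s a else none

/-- A total function viewed as a partial function. -/
def total {α β : Type*} (h : α → β) : α → Option β := fun a => some (h a)

/-- A partial homomorphism: preserves related tuples lying in its domain. -/
def IsPHom {σ : Sig} (A B : Str σ) (s : A.carrier → Option B.carrier) : Prop :=
  ∀ r (t : Fin (σ.ar r) → A.carrier) (t' : Fin (σ.ar r) → B.carrier),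
    A.rel r t → (∀ i, s (t i) = some (t' i)) → B.rel r t'

/-- A partial isomorphism: an injective partial homomorphism reflecting relations. -/
def IsPIso {σ : Sig} (A B : Str σ) (s : A.carrier → Option B.carrier) : Prop :=
  IsPHom A B s ∧
  (∀ a a' b, s a = some b → s a' = some b → a = a') ∧
  (∀ r (t : Fin (σ.ar r) → A.carrier) (t' : Fin (σ.ar r) → B.carrier),
    B.rel r t' → (∀ i, s (t i) = some (t' i)) → A.rel r t)

/-- `Hom_k(A,B)`: partial homomorphisms with domain of size at most `k`. -/
def Homk {σ : Sig} (k : ℕ) (A B : Str σ) : Set (A.carrier → Option B.carrier) :=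
  {s | IsPHom A B s ∧ (pdom s).Finite ∧ (pdom s).ncard ≤ k}

/-- `Isom_k(A,B)`: partial isomorphisms with domain of size at most `k`. -/
def Isomk {σ : Sig} (k : ℕ) (A B : Str σ) : Set (A.carrier → Option B.carrier) :=
  {s | IsPIso A B s ∧ (pdom s).Finite ∧ (pdom s).ncard ≤ k}

/-- `s ∪ {(a,b)}`: extend a partial function by one value. -/
noncomputable def extend {α β : Type*} (s : α → Option β) (a : α) (b : β) : α → Option β :=
  fun x => if x = a then some b else s x

/-- Downward closure: closed under restriction. -/
def DownClosed {α β : Type*} (S : Set (α → Option β)) : Prop :=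
  ∀ s ∈ S, ∀ U, restrictP s U ∈ S

/-- `Forth S s`: for all `a` there is `b` with `s ∪ {(a,b)} ∈ S`. -/
def Forth {α β : Type*} (S : Set (α → Option β)) (s : α → Option β) : Prop :=
  ∀ a, ∃ b, extend s a b ∈ S

/-- The forth property for all members with domain of size `< k`. -/
def HasForth {α β : Type*} (k : ℕ) (S : Set (α → Option β)) : Prop :=
  ∀ s ∈ S, (pdom s).ncard < k → Forth S s

/-- Bijective forth: there is a bijection `b` with `s ∪ {(a, b a)} ∈ S` for all `a`. -/
def BijForth {α β : Type*} (S : Set (α → Option β)) (s : α → Option β) : Prop :=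
  ∃ b : α → β, Function.Bijective b ∧ ∀ a, extend s a (b a) ∈ S

/-- The bijective forth property for all members with domain of size `< k`. -/
def HasBijForth {α β : Type*} (k : ℕ) (S : Set (α → Option β)) : Prop :=
  ∀ s ∈ S, (pdom s).ncard < k → BijForth S s

/-- Restriction of a formal ℤ-linear combination of partial functions, collecting like terms. -/
noncomputable def restrictZ {α β : Type*} (U : Set α) (r : (α → Option β) →₀ ℤ) :
    (α → Option β) →₀ ℤ :=
  Finsupp.mapDomain (fun s => restrictP s U) r

/-- A global ℤ-linear section of `S` over the contexts of size at most `k`. -/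
def IsZSection {α β : Type*} (k : ℕ) (S : Set (α → Option β))
    (r : Set α → ((α → Option β) →₀ ℤ)) : Prop :=
  (∀ U : Set α, U.Finite → U.ncard ≤ k → ∀ t ∈ (r U).support, t ∈ S ∧ pdom t = U) ∧
  (∀ U U' : Set α, U.Finite → U.ncard ≤ k → U'.Finite → U'.ncard ≤ k →
    restrictZ (U ∩ U') (r U) = restrictZ (U ∩ U') (r U'))

/-- `s` is ℤ-extendable in `S`: some global ℤ-linear section restricts to `s` at its domain. -/
def ZExt {α β : Type*} (k : ℕ) (S : Set (α → Option β)) (s : α → Option β) : Prop :=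
  ∃ r, IsZSection k S r ∧ r (pdom s) = Finsupp.single s 1

/-- The set of restrictions of a total function `h` to subsets of size at most `k`. -/
def Sres {α β : Type*} (h : α → β) (k : ℕ) : Set (α → Option β) :=
  {s | ∃ U : Set α, U.Finite ∧ U.ncard ≤ k ∧ s = restrictP (total h) U}

/-- `A →_k B`: k-consistency (existence of a nonempty downward-closed forth set). -/
def karrow {σ : Sig} (k : ℕ) (A B : Str σ) : Prop :=
  ∃ S : Set (A.carrier → Option B.carrier),
    S.Nonempty ∧ S ⊆ Homk k A B ∧ DownClosed S ∧ HasForth k S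

/-- `A →ᶻ_k B`: cohomological k-consistency. -/
def cohomConsistent {σ : Sig} (k : ℕ) (A B : Str σ) : Prop :=
  ∃ S : Set (A.carrier → Option B.carrier), S.Nonempty ∧ S ⊆ Homk k A B ∧
    DownClosed S ∧ HasForth k S ∧ ∀ s ∈ S, ZExt k S s

/-- Composition of partial functions. -/
def pcomp {α β γ : Type*} (s : β → Option γ) (t : α → Option β) : α → Option γ :=
  fun a => (t a).bind s

section aux
variable {α β γ : Type*}

lemma pdom_restrictP' (s : α → Option β) (U : Set α) :
    pdom (restrictP s U) = U ∩ pdom s := by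
  ext a
  by_cases h : a ∈ U <;> simp [pdom, restrictP, h]

lemma pdom_pcomp' {s : β → Option γ} {t : α → Option β} (h : pim t ⊆ pdom s) :
    pdom (pcomp s t) = pdom t := by
  ext a
  simp only [pdom, pcomp, Set.mem_setOf_eq]
  cases ht : t a with
  | none => simp
  | some b =>
    have : s b ≠ none := h ⟨a, ht⟩
    simpa using this

lemma pcomp_restrictP (s : β → Option γ) (t : α → Option β) (U : Set α) :
    restrictP (pcomp s t) U = pcomp s (restrictP t U) := by
  funext a
  by_cases h : a ∈ U <;> simp [restrictP, pcomp, h]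

lemma pim_restrictP_subset (t : α → Option β) (U : Set α) :
    pim (restrictP t U) ⊆ pim t := by
  rintro b ⟨a, ha⟩
  by_cases h : a ∈ U
  · exact ⟨a, by simpa [restrictP, h] using ha⟩
  · simp [restrictP, h] at ha

lemma pim_finite {t : α → Option β} (ht : (pdom t).Finite) : (pim t).Finite := by
  have h1 : Option.some '' pim t ⊆ t '' pdom t := by
    rintro _ ⟨b, ⟨a, ha⟩, rfl⟩
    exact ⟨a, by simp [pdom, ha], ha⟩
  have := ((ht.image t).subset h1).preimage (Option.some_injective β).injOn
  simpa [Set.preimage_image_eq _ (Option.some_injective β)] using this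

lemma pim_ncard_le {t : α → Option β} (ht : (pdom t).Finite) :
    (pim t).ncard ≤ (pdom t).ncard := by
  have h1 : Option.some '' pim t ⊆ t '' pdom t := by
    rintro _ ⟨b, ⟨a, ha⟩, rfl⟩
    exact ⟨a, by simp [pdom, ha], ha⟩
  calc (pim t).ncard = (Option.some '' pim t).ncard :=
        (Set.ncard_image_of_injective _ (Option.some_injective β)).symm
    _ ≤ (t '' pdom t).ncard := Set.ncard_le_ncard h1 (ht.image t)
    _ ≤ (pdom t).ncard := Set.ncard_image_le ht

lemma pim_extend_subset (t : α → Option β) (a : α) (b : β) :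
    pim (extend t a b) ⊆ pim t ∪ {b} := by
  rintro c ⟨x, hx⟩
  by_cases h : x = a
  · right; simp [extend, h] at hx; simp [hx]
  · left; exact ⟨x, by simpa [extend, h] using hx⟩

end aux

/-- Composing two strategy sets yields a strategy set; k-consistency is transitive. -/
theorem stmt7 (σ : Sig) (A B C : Str σ)
    [Fintype A.carrier] [Fintype B.carrier] [Fintype C.carrier] (k : ℕ)
    (SAB : Set (A.carrier → Option B.carrier)) (SBC : Set (B.carrier → Option C.carrier))
    (hAB : SAB ⊆ Homk k A B) (hBC : SBC ⊆ Homk k B C)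
    (hABne : SAB.Nonempty) (hBCne : SBC.Nonempty)
    (hABd : DownClosed SAB) (hBCd : DownClosed SBC)
    (hABf : HasForth k SAB) (hBCf : HasForth k SBC) :
    ({u | ∃ t ∈ SAB, ∃ s ∈ SBC, pim t ⊆ pdom s ∧ u = pcomp s t} :
        Set (A.carrier → Option C.carrier)).Nonempty ∧
    ({u | ∃ t ∈ SAB, ∃ s ∈ SBC, pim t ⊆ pdom s ∧ u = pcomp s t} :
        Set (A.carrier → Option C.carrier)) ⊆ Homk k A C ∧
    DownClosed ({u | ∃ t ∈ SAB, ∃ s ∈ SBC, pim t ⊆ pdom s ∧ u = pcomp s t} :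
        Set (A.carrier → Option C.carrier)) ∧
    HasForth k ({u | ∃ t ∈ SAB, ∃ s ∈ SBC, pim t ⊆ pdom s ∧ u = pcomp s t} :
        Set (A.carrier → Option C.carrier)) ∧
    karrow k A C := by
  set S : Set (A.carrier → Option C.carrier) :=
    {u | ∃ t ∈ SAB, ∃ s ∈ SBC, pim t ⊆ pdom s ∧ u = pcomp s t} with hS
  -- Nonempty
  obtain ⟨t0, ht0⟩ := hABne
  obtain ⟨s0, hs0⟩ := hBCne
  have hne : S.Nonempty := by
    refine ⟨pcomp s0 (restrictP t0 ∅), restrictP t0 ∅, hABd t0 ht0 ∅, s0, hs0, ?_, rfl⟩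
    intro b hb
    rcases hb with ⟨a, ha⟩
    simp [restrictP] at ha
  -- ⊆ Homk
  have hsub : S ⊆ Homk k A C := by
    rintro u ⟨t, ht, s, hs, him, rfl⟩
    obtain ⟨htH, htF, htk⟩ := hAB ht
    obtain ⟨hsH, _, _⟩ := hBC hs
    refine ⟨?_, ?_, ?_⟩
    · intro r tup tup' hrel hval
      have hchoice : ∀ i, ∃ b, t (tup i) = some b ∧ s b = some (tup' i) := by
        intro i
        have := hval i
        cases htt : t (tup i) with
        | none => simp [pcomp, htt] at this
        | some b => exact ⟨b, rfl, by simpa [pcomp, htt] using this⟩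
      choose m hm1 hm2 using hchoice
      exact hsH r m tup' (htH r tup m hrel hm1) hm2
    · rw [pdom_pcomp' him]; exact htF
    · rw [pdom_pcomp' him]; exact htk
  -- DownClosed
  have hdc : DownClosed S := by
    rintro u ⟨t, ht, s, hs, him, rfl⟩ U
    exact ⟨restrictP t U, hABd t ht U, s, hs,
      fun b hb => him (pim_restrictP_subset t U hb), pcomp_restrictP s t U⟩
  -- HasForth
  have hforth : HasForth k S := by
    rintro u ⟨t, ht, s, hs, him, rfl⟩ hcard a
    rw [pdom_pcomp' him] at hcard
    obtain ⟨htH, htF, htk⟩ := hAB ht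
    by_cases ha : a ∈ pdom t
    · -- a already in domain: extend with existing value
      have h1 : t a ≠ none := ha
      cases hta : t a with
      | none => exact absurd hta h1
      | some b =>
        have hb : s b ≠ none := him ⟨a, hta⟩
        cases hsb : s b with
        | none => exact absurd hsb hb
        | some c =>
          refine ⟨c, ?_⟩
          have : extend (pcomp s t) a c = pcomp s t := by
            funext x
            by_cases hx : x = a
            · simp [extend, hx, pcomp, hta, hsb]
            · simp [extend, hx]
          rw [this]
          exact ⟨t, ht, s, hs, him, rfl⟩
    · -- a new
      obtain ⟨b, htb⟩ := hABf t ht hcard a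
      set s' := restrictP s (pim t) with hs'
      have hs'mem : s' ∈ SBC := hBCd s hs _
      have hpds' : pdom s' = pim t := by
        rw [pdom_restrictP']
        exact Set.inter_eq_self_of_subset_left him
      have hs'eq : ∀ b'' ∈ pim t, s' b'' = s b'' := by
        intro b'' hb''; simp [hs', restrictP, hb'']
      have hs'card : (pdom s').ncard < k :=
        hpds' ▸ lt_of_le_of_lt (pim_ncard_le htF) hcard
      -- get c with extend s' b c ∈ SBC, with c compatible with s if b ∈ pim t
      have hext : ∃ c, extend s' b c ∈ SBC ∧ (b ∈ pim t → s b = some c) := by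
        cases hs'b : s' b with
        | some c =>
          refine ⟨c, ?_, fun hbt => (hs'eq b hbt) ▸ hs'b⟩
          have : extend s' b c = s' := by
            funext x
            by_cases hx : x = b
            · simp [extend, hx, hs'b]
            · simp [extend, hx]
          rw [this]; exact hs'mem
        | none =>
          obtain ⟨c, hc⟩ := hBCf s' hs'mem hs'card b
          refine ⟨c, hc, fun hbt => ?_⟩
          have : b ∈ pdom s' := hpds' ▸ hbt
          exact absurd hs'b this
      obtain ⟨c, hcmem, hccomp⟩ := hext
      refine ⟨c, extend t a b, htb, extend s' b c, hcmem, ?_, ?_⟩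
      · -- pim (extend t a b) ⊆ pdom (extend s' b c)
        intro b'' hb''
        rcases pim_extend_subset t a b hb'' with h | h
        · have : b'' ∈ pdom s' := hpds' ▸ h
          simp only [pdom, extend, Set.mem_setOf_eq] at this ⊢
          by_cases hx : b'' = b
          · simp [hx]
          · simpa [hx] using this
        · simp only [Set.mem_singleton_iff] at h
          simp [pdom, extend, h]
      · -- extend (pcomp s t) a c = pcomp (extend s' b c) (extend t a b)
        funext x
        by_cases hx : x = a
        · simp [extend, hx, pcomp]
        · simp only [extend, hx, if_false, pcomp]
          cases htx : t x with
          | none => simp [htx]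
          | some b'' =>
            have hb'' : b'' ∈ pim t := ⟨x, htx⟩
            simp only [htx, Option.bind_some]
            by_cases hbb : b'' = b
            · subst hbb
              rw [hccomp hb'']
              simp [extend]
            · simp [extend, hbb, hs'eq b'' hb'']
  exact ⟨hne, hsub, hdc, hforth, S, hne, hsub, hdc, hforth⟩
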